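/- arXiv:1311.3922 — 2 statements merged into one kernel-verified Lean document; each statement's English description precedes it below -/
import Mathlib

section
/- Let F be a partial order on {1,…,n}. Then F equals inc(T) for a (necessarily unique) binary tree T of size n if and only if every relation of F is of the form a ⊴_F c with a < c and, whenever a ⊴_F c with a < c, one has b ⊴_F c for all a < b < c. Symmetrically, F equals dec(T) for a (necessarily unique) binary tree T of size n if and only if every relation of F is of the form c ⊴_F a with c > a and, whenever c ⊴_F a with a < c, one has b ⊴_F a for all a < b < c. -/
/-- Planar binary trees: empty, or a node with a left and a right subtree. -/
inductive BinTree : Type where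
  | leaf : BinTree
  | node : BinTree → BinTree → BinTree
  deriving DecidableEq

namespace BinTree

/-- Size: number of internal nodes. -/
def size : BinTree → ℕ
  | leaf => 0
  | node l r => l.size + r.size + 1

/-- `sub T o a b` : in the binary-search-tree labelling of `T` shifted by `o`
(its labels are `o+1, …, o+T.size`), the node labelled `a` lies in the subtree
rooted at the node labelled `b`, i.e. `a ⊴_T b`. -/
def sub : BinTree → ℕ → ℕ → ℕ → Prop
  | leaf, _, _, _ => False
  | node l r, o, a, b =>
      (b = o + l.size + 1 ∧ o + 1 ≤ a ∧ a ≤ o + l.size + r.size + 1) ∨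
      l.sub o a b ∨ r.sub (o + l.size + 1) a b

/-- One right rotation, applied at any position of the tree. -/
inductive Rot : BinTree → BinTree → Prop
  | base (A B C : BinTree) : Rot (node (node A B) C) (node A (node B C))
  | left {l l' : BinTree} (r : BinTree) : Rot l l' → Rot (node l r) (node l' r)
  | right (l : BinTree) {r r' : BinTree} : Rot r r' → Rot (node l r) (node l r')

end BinTree

/-- Tamari order: reflexive-transitive closure of right rotation. -/
def tamariLE : BinTree → BinTree → Prop := Relation.ReflTransGen BinTree.Rot

/-- `incRel T a c` : `a` is below `c` in the initial forest `inc T`. -/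
def incRel (T : BinTree) (a c : ℕ) : Prop := a < c ∧ T.sub 0 a c

/-- `decRel T c a` : `c` is below `a` in the final forest `dec T`. -/
def decRel (T : BinTree) (c a : ℕ) : Prop := a < c ∧ T.sub 0 c a

/-!
A relation `S` with the interval property is the initial forest of the tree obtained recursively
as follows: the root `m` is the largest label above the smallest label `1` (or `1` itself); every
`a < m` lies below `m`, no relation starts at or below `m` and ends above it, so the relations
among `a < m` and among `a > m` are the initial forests of the left and the right subtree.
Conversely the root of a tree is recovered from its initial forest as the highest ancestor of
its leftmost node, which makes the tree unique. Final forests are initial forests of the mirror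
image, read with the labels reversed.
-/

namespace BinTree

lemma sub_bounds {T : BinTree} {o a b : ℕ} (h : T.sub o a b) :
    o + 1 ≤ a ∧ a ≤ o + T.size ∧ o + 1 ≤ b ∧ b ≤ o + T.size := by
  induction T generalizing o with
  | leaf => exact h.elim
  | node l r ihl ihr =>
    simp only [size]
    rcases h with h | h | h
    · omega
    · have := ihl h; omega
    · have := ihr h; omega

lemma sub_of_mem_uIcc {T : BinTree} {o a b c : ℕ} (h : T.sub o a c) (hb : b ∈ Set.uIcc a c) :
    T.sub o b c := by
  rw [Set.mem_uIcc] at hb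
  induction T generalizing o with
  | leaf => exact h.elim
  | node l r ihl ihr =>
    rcases h with ⟨rfl, ha⟩ | h | h
    · exact Or.inl ⟨rfl, by omega⟩
    · exact Or.inr (Or.inl (ihl h))
    · exact Or.inr (Or.inr (ihr h))

lemma sub_left_iff {l r : BinTree} {o a c : ℕ} :
    l.sub o a c ↔ (node l r).sub o a c ∧ c < o + l.size + 1 := by
  refine ⟨fun h => ⟨Or.inr (Or.inl h), by have := sub_bounds h; omega⟩, ?_⟩
  rintro ⟨h | h | h, hc⟩
  · omega
  · exact h
  · have := sub_bounds h; omega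

lemma sub_right_iff {l r : BinTree} {o a c : ℕ} :
    r.sub (o + l.size + 1) a c ↔ (node l r).sub o a c ∧ o + l.size + 1 < c := by
  refine ⟨fun h => ⟨Or.inr (Or.inr h), by have := sub_bounds h; omega⟩, ?_⟩
  rintro ⟨h | h | h, hc⟩
  · omega
  · have := sub_bounds h; omega
  · exact h

/-- The root of `node l r` is the highest ancestor of its leftmost node `o + 1`. -/
lemma size_le_of_sub_imp {l r l' r' : BinTree} {o : ℕ}
    (h : ∀ a c, a < c → (node l r).sub o a c → (node l' r').sub o a c) : l.size ≤ l'.size := by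
  rcases Nat.eq_zero_or_pos l.size with hl | hl
  · omega
  · rcases h (o + 1) (o + l.size + 1) (by omega) (Or.inl ⟨rfl, le_rfl, by omega⟩) with h | h | h
    · omega
    · have := sub_bounds h; omega
    · have := sub_bounds h; omega

lemma eq_of_sub_iff {T T' : BinTree} {o : ℕ} (hsize : T.size = T'.size)
    (h : ∀ a c, a < c → (T.sub o a c ↔ T'.sub o a c)) : T = T' := by
  induction T generalizing T' o with
  | leaf =>
    cases T' with
    | leaf => rfl
    | node => simp [size] at hsize
  | node l r ihl ihr =>
    cases T' with
    | leaf => simp [size] at hsize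
    | node l' r' =>
      have hl : l.size = l'.size := le_antisymm (size_le_of_sub_imp fun a c hac => (h a c hac).1)
        (size_le_of_sub_imp fun a c hac => (h a c hac).2)
      have hr : r.size = r'.size := by simp only [size] at hsize; omega
      rw [ihl hl (o := o) fun a c hac => by
          rw [sub_left_iff (r := r), sub_left_iff (l := l') (r := r'), h a c hac, hl],
        ihr hr (o := o + l.size + 1) fun a c hac => by
          rw [sub_right_iff (l := l) (r := r), hl, sub_right_iff (l := l') (r := r'), h a c hac]]

lemma exists_split {n o : ℕ} {S : ℕ → ℕ → Prop} (hn : 0 < n)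
    (hsupp : ∀ a c, S a c → o < a ∧ c ≤ o + n) (htrans : ∀ a b c, S a b → S b c → S a c)
    (hint : ∀ a b c, S a c → a < b → b < c → S b c) :
    ∃ m, o < m ∧ m ≤ o + n ∧ (∀ a, o < a → a < m → S a m) ∧ ∀ a c, S a c → a ≤ m → c ≤ m := by
  classical
  let P c := c = o + 1 ∨ S (o + 1) c
  have hm : P (Nat.findGreatest P (o + n)) :=
    Nat.findGreatest_spec (m := o + 1) (by omega) (Or.inl rfl)
  set m := Nat.findGreatest P (o + n)
  have hmax : ∀ c, S (o + 1) c → c ≤ m :=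
    fun c hc => Nat.le_findGreatest (hsupp _ _ hc).2 (Or.inr hc)
  refine ⟨m, Nat.le_findGreatest (m := o + 1) (n := o + n) (by omega) (Or.inl rfl),
    Nat.findGreatest_le _, ?_, ?_⟩
  · intro a ha ham
    obtain hm | hm := hm
    · omega
    · obtain rfl | h := (show a = o + 1 ∨ o + 1 < a by omega)
      exacts [hm, hint _ _ _ hm h ham]
  · intro a c hac ham
    by_contra! hmc
    have hmc' : S m c := (eq_or_lt_of_le ham).elim (· ▸ hac) fun h => hint _ _ _ hac h hmc
    have := hmax c (hm.elim (fun h => h ▸ hmc') fun h => htrans _ _ _ h hmc')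
    omega

theorem exists_sub_iff (n o : ℕ) (S : ℕ → ℕ → Prop)
    (hsupp : ∀ a c, S a c → o < a ∧ c ≤ o + n) (hinc : ∀ a c, S a c → a < c)
    (htrans : ∀ a b c, S a b → S b c → S a c) (hint : ∀ a b c, S a c → a < b → b < c → S b c) :
    ∃ T : BinTree, T.size = n ∧ ∀ a c, S a c ↔ a < c ∧ T.sub o a c := by
  induction n using Nat.strong_induction_on generalizing o S with
  | _ n ih =>
  rcases Nat.eq_zero_or_pos n with rfl | hn
  · refine ⟨leaf, rfl, fun a c => ⟨fun h => ?_, fun h => h.2.elim⟩⟩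
    have := hsupp a c h; have := hinc a c h; omega
  obtain ⟨m, hom, hmn, hbelow, hclosed⟩ := exists_split hn hsupp htrans hint
  obtain ⟨L, hLsize, hL⟩ := ih (m - (o + 1)) (by omega) o (fun a c => S a c ∧ c < m)
    (fun a c h => ⟨(hsupp a c h.1).1, by omega⟩) (fun a c h => hinc a c h.1)
    (fun a b c h h' => ⟨htrans a b c h.1 h'.1, h'.2⟩)
    (fun a b c h hab hbc => ⟨hint a b c h.1 hab hbc, h.2⟩)
  obtain ⟨R, hRsize, hR⟩ := ih (o + n - m) (by omega) m (fun a c => S a c ∧ m < a)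
    (fun a c h => ⟨h.2, by have := hsupp a c h.1; omega⟩) (fun a c h => hinc a c h.1)
    (fun a b c h h' => ⟨htrans a b c h.1 h'.1, h.2⟩)
    (fun a b c h hab hbc => ⟨hint a b c h.1 hab hbc, by omega⟩)
  have hroot : o + L.size + 1 = m := by omega
  refine ⟨node L R, by simp only [size]; omega, fun a c => ?_⟩
  simp only [sub, hroot]
  constructor
  · intro h
    have := hsupp a c h
    refine ⟨hinc a c h, ?_⟩
    rcases lt_trichotomy c m with hc | rfl | hc
    · exact Or.inr (Or.inl ((hL a c).1 ⟨h, hc⟩).2)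
    · exact Or.inl ⟨rfl, by omega, by have := hinc a c h; omega⟩
    · have ham : m < a := by by_contra! ham; have := hclosed a c h ham; omega
      exact Or.inr (Or.inr ((hR a c).1 ⟨h, ham⟩).2)
  · rintro ⟨hac, ⟨rfl, ha, -⟩ | h | h⟩
    · exact hbelow a ha hac
    · exact ((hL a c).2 ⟨hac, h⟩).1
    · exact ((hR a c).2 ⟨hac, h⟩).1

def mirror : BinTree → BinTree
  | leaf => leaf
  | node l r => node (mirror r) (mirror l)

@[simp]
lemma size_mirror (T : BinTree) : T.mirror.size = T.size := by
  induction T with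
  | leaf => rfl
  | node l r ihl ihr => simp only [mirror, size, ihl, ihr]; omega

@[simp]
lemma mirror_mirror (T : BinTree) : T.mirror.mirror = T := by
  induction T with
  | leaf => rfl
  | node l r ihl ihr => rw [mirror, mirror, ihl, ihr]

lemma mirror_injective : Function.Injective mirror :=
  Function.LeftInverse.injective mirror_mirror

lemma sub_mirror_iff {T : BinTree} {o o' a a' b b' : ℕ} (ha : a + a' = o + o' + T.size + 1)
    (hb : b + b' = o + o' + T.size + 1) : T.mirror.sub o a b ↔ T.sub o' a' b' := by
  induction T generalizing o o' with
  | leaf => exact Iff.rfl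
  | node l r ihl ihr =>
    simp only [size] at ha hb
    simp only [mirror, sub, size_mirror]
    rw [ihr (o' := o' + l.size + 1) (by omega) (by omega), ihl (o' := o') (by omega) (by omega)]
    exact or_congr (by omega) or_comm

lemma sub_zero_mirror_iff (T : BinTree) (a b : ℕ) :
    T.mirror.sub 0 a b ↔ T.sub 0 (T.size + 1 - a) (T.size + 1 - b) := by
  constructor
  · intro h
    have := sub_bounds h
    rw [size_mirror] at this
    exact (sub_mirror_iff (by omega) (by omega)).1 h
  · intro h
    have := sub_bounds h
    exact (sub_mirror_iff (by omega) (by omega)).2 h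

end BinTree

open BinTree

lemma incRel_mirror_iff (T : BinTree) (x y : ℕ) :
    incRel T.mirror x y ↔ decRel T (T.size + 1 - x) (T.size + 1 - y) := by
  rw [incRel, decRel, sub_zero_mirror_iff, and_comm, and_comm (a := _ < _)]
  exact and_congr_right fun h => by have := sub_bounds h; omega

lemma decRel_mirror_iff (T : BinTree) (c a : ℕ) :
    decRel T.mirror c a ↔ incRel T (T.size + 1 - c) (T.size + 1 - a) := by
  rw [incRel, decRel, sub_zero_mirror_iff, and_comm, and_comm (a := _ < _)]
  exact and_congr_right fun h => by have := sub_bounds h; omega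

lemma rel_tsub_tsub_iff {S : ℕ → ℕ → Prop} {k : ℕ} (hS : ∀ a b, S a b → a < k ∧ b < k)
    (a b : ℕ) : S (k - (k - a)) (k - (k - b)) ↔ S a b := by
  by_cases h : a ≤ k ∧ b ≤ k
  · rw [Nat.sub_sub_self h.1, Nat.sub_sub_self h.2]
  · constructor <;> intro hab <;> have := hS _ _ hab <;> omega

lemma incRel_of_lt_of_lt {T : BinTree} {a b c : ℕ} (h : incRel T a c) (hab : a < b) (hbc : b < c) :
    incRel T b c :=
  ⟨hbc, sub_of_mem_uIcc h.2 (Set.mem_uIcc.2 (Or.inl ⟨hab.le, hbc.le⟩))⟩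

lemma decRel_of_lt_of_lt {T : BinTree} {a b c : ℕ} (h : decRel T c a) (hab : a < b) (hbc : b < c) :
    decRel T b a :=
  ⟨hab, sub_of_mem_uIcc h.2 (Set.mem_uIcc.2 (Or.inr ⟨hab.le, hbc.le⟩))⟩

lemma eq_of_incRel_iff {T T' : BinTree} (hsize : T.size = T'.size)
    (h : ∀ a c, incRel T a c ↔ incRel T' a c) : T = T' :=
  eq_of_sub_iff hsize fun a c hac => by simpa [incRel, hac] using h a c

lemma eq_of_decRel_iff {T T' : BinTree} (hsize : T.size = T'.size)
    (h : ∀ c a, decRel T c a ↔ decRel T' c a) : T = T' :=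
  mirror_injective <| eq_of_incRel_iff (by simpa using hsize) fun x y => by
    rw [incRel_mirror_iff, incRel_mirror_iff, hsize, h]

lemma exists_decRel_iff (n : ℕ) (S : ℕ → ℕ → Prop) (hsupp : ∀ c a, S c a → 0 < a ∧ c ≤ n)
    (hdec : ∀ c a, S c a → a < c) (htrans : ∀ a b c, S a b → S b c → S a c)
    (hint : ∀ a b c, S c a → a < b → b < c → S b a) :
    ∃ T : BinTree, T.size = n ∧ ∀ c a, S c a ↔ decRel T c a := by
  obtain ⟨T, hsize, hT⟩ := exists_sub_iff n 0 (fun x y => S (n + 1 - x) (n + 1 - y))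
    (fun x y h => by have := hsupp _ _ h; omega) (fun x y h => by have := hdec _ _ h; omega)
    (fun x y z h h' => htrans _ _ _ h h')
    (fun x y z h hxy hyz => by have := hsupp _ _ h; exact hint _ _ _ h (by omega) (by omega))
  refine ⟨T.mirror, by simpa using hsize, fun c a => ?_⟩
  rw [decRel_mirror_iff, hsize]
  have hS : ∀ c a, S c a → c < n + 1 ∧ a < n + 1 := fun c a h => by
    have := hsupp c a h; have := hdec c a h; omega
  exact (rel_tsub_tsub_iff hS c a).symm.trans (hT _ _)

theorem existsUnique_incRel_iff (n : ℕ) (S : ℕ → ℕ → Prop) (hsupp : ∀ a c, S a c → 0 < a ∧ c ≤ n)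
    (htrans : ∀ a b c, S a b → S b c → S a c) :
    (∃! T : BinTree, T.size = n ∧ ∀ a c, S a c ↔ incRel T a c) ↔
      (∀ a c, S a c → a < c) ∧ ∀ a b c, S a c → a < b → b < c → S b c := by
  refine ⟨fun ⟨T, ⟨_, hT⟩, _⟩ => ⟨fun a c h => ((hT a c).1 h).1, fun a b c h hab hbc =>
    (hT b c).2 (incRel_of_lt_of_lt ((hT a c).1 h) hab hbc)⟩, fun ⟨hinc, hint⟩ => ?_⟩
  refine existsUnique_of_exists_of_unique
    (exists_sub_iff n 0 S (by simpa using hsupp) hinc htrans hint) ?_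
  exact fun T T' ⟨hsize, hT⟩ ⟨hsize', hT'⟩ =>
    eq_of_incRel_iff (hsize.trans hsize'.symm) fun a c => (hT a c).symm.trans (hT' a c)

theorem existsUnique_decRel_iff (n : ℕ) (S : ℕ → ℕ → Prop) (hsupp : ∀ c a, S c a → 0 < a ∧ c ≤ n)
    (htrans : ∀ a b c, S a b → S b c → S a c) :
    (∃! T : BinTree, T.size = n ∧ ∀ c a, S c a ↔ decRel T c a) ↔
      (∀ c a, S c a → a < c) ∧ ∀ a b c, S c a → a < b → b < c → S b a := by
  refine ⟨fun ⟨T, ⟨_, hT⟩, _⟩ => ⟨fun c a h => ((hT c a).1 h).1, fun a b c h hab hbc =>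
    (hT b a).2 (decRel_of_lt_of_lt ((hT c a).1 h) hab hbc)⟩, fun ⟨hdec, hint⟩ => ?_⟩
  refine existsUnique_of_exists_of_unique (exists_decRel_iff n S hsupp hdec htrans hint) ?_
  exact fun T T' ⟨hsize, hT⟩ ⟨hsize', hT'⟩ =>
    eq_of_decRel_iff (hsize.trans hsize'.symm) fun c a => (hT c a).symm.trans (hT' c a)

theorem stmt0_general (n : ℕ) (F : ℕ → ℕ → Prop)
    (hsupp : ∀ a b, F a b → 1 ≤ a ∧ a ≤ n ∧ 1 ≤ b ∧ b ≤ n)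
    (hanti : ∀ a b, F a b → F b a → a = b)
    (htrans : ∀ a b c, F a b → F b c → F a c) :
    ((∃! T : BinTree, T.size = n ∧ ∀ a c, (F a c ∧ a ≠ c) ↔ incRel T a c) ↔
      ((∀ a c, F a c → a ≠ c → a < c) ∧
        ∀ a b c, F a c → a < b → b < c → F b c)) ∧
    ((∃! T : BinTree, T.size = n ∧ ∀ c a, (F c a ∧ c ≠ a) ↔ decRel T c a) ↔
      ((∀ c a, F c a → c ≠ a → a < c) ∧
        ∀ a b c, F c a → a < b → b < c → F b a)) := by
  have hStrans : ∀ a b c, F a b ∧ a ≠ b → F b c ∧ b ≠ c → F a c ∧ a ≠ c :=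
    fun a b c hab hbc =>
      ⟨htrans a b c hab.1 hbc.1, fun hac => hab.2 (hanti a b hab.1 (hac ▸ hbc.1))⟩
  constructor
  · rw [existsUnique_incRel_iff n _ (fun a c h => by have := hsupp a c h.1; omega) hStrans]
    refine and_congr ⟨fun h a c hF hne => h a c ⟨hF, hne⟩, fun h a c hS => h a c hS.1 hS.2⟩
      ⟨fun h a b c hF hab hbc => (h a b c ⟨hF, by omega⟩ hab hbc).1,
        fun h a b c hS hab hbc => ⟨h a b c hS.1 hab hbc, by omega⟩⟩
  · rw [existsUnique_decRel_iff n _ (fun c a h => by have := hsupp c a h.1; omega) hStrans]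
    refine and_congr ⟨fun h c a hF hne => h c a ⟨hF, hne⟩, fun h c a hS => h c a hS.1 hS.2⟩
      ⟨fun h a b c hF hab hbc => (h a b c ⟨hF, by omega⟩ hab hbc).1,
        fun h a b c hS hab hbc => ⟨h a b c hS.1 hab hbc, by omega⟩⟩

/-- A labelled forest poset `F` on `{1,…,n}` is the initial forest `inc T` of a
(unique) binary tree `T` of size `n` iff all its strict relations are increasing
and satisfy the interval condition; symmetrically for final forests. -/
theorem stmt0 (n : ℕ) (F : ℕ → ℕ → Prop)
    (hsupp : ∀ a b, F a b → 1 ≤ a ∧ a ≤ n ∧ 1 ≤ b ∧ b ≤ n)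
    (hrefl : ∀ a, 1 ≤ a → a ≤ n → F a a)
    (hanti : ∀ a b, F a b → F b a → a = b)
    (htrans : ∀ a b c, F a b → F b c → F a c) :
    ((∃! T : BinTree, T.size = n ∧ ∀ a c, (F a c ∧ a ≠ c) ↔ incRel T a c) ↔
      ((∀ a c, F a c → a ≠ c → a < c) ∧
        ∀ a b c, F a c → a < b → b < c → F b c)) ∧
    ((∃! T : BinTree, T.size = n ∧ ∀ c a, (F c a ∧ c ≠ a) ↔ decRel T c a) ↔
      ((∀ c a, F c a → c ≠ a → a < c) ∧
        ∀ a b c, F c a → a < b → b < c → F b a)) :=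
  stmt0_general n F hsupp hanti htrans
end

section
/- Let I1 and I2 be interval-posets of sizes k1 and k2, let t = trees(I2), and let x1 < x2 < ⋯ < xt be the least labels of the connected components of dec(I2), shifted by k1+1. Then 𝔹(I1,I2) has exactly t+1 elements P_0, P_1, …, P_t, where P_i is the partial order on {1,…,k1+k2+1} generated by the relations of I1 on {1,…,k1}, the relations of I2 shifted by k1+1 on {k1+2,…,k1+k2+1}, the increasing relations j ⊴ k1+1 for all j ≤ k1, and the decreasing relations x_j ⊴ k1+1 for all j ≤ i. Moreover, in every element of 𝔹(I1,I2) there is no relation between an element of {1,…,k1} and an element of {k1+2,…,k1+k2+1}. -/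
/-- An interval-poset: a partial order on `{1, …, n}` in which, whenever
`a ⊴ c` and `a < c`, all `a < b < c` satisfy `b ⊴ c`, and whenever `c ⊴ a` and
`a < c`, all `a < b < c` satisfy `b ⊴ a`.  `rel x y` means "`x` is below `y`". -/
structure IntervalPoset : Type where
  n : ℕ
  rel : ℕ → ℕ → Prop
  supp : ∀ a b, rel a b → 1 ≤ a ∧ a ≤ n ∧ 1 ≤ b ∧ b ≤ n
  refl : ∀ a, 1 ≤ a → a ≤ n → rel a a
  antisymm : ∀ a b, rel a b → rel b a → a = b
  trans : ∀ a b c, rel a b → rel b c → rel a c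
  incCond : ∀ a b c, rel a c → a < b → b < c → rel b c
  decCond : ∀ a b c, rel c a → a < b → b < c → rel b a

/-- The partial order on `{1, …, n}` generated by a family `r` of relations. -/
def genClos (n : ℕ) (r : ℕ → ℕ → Prop) : ℕ → ℕ → Prop :=
  fun a b => (a = b ∧ 1 ≤ a ∧ a ≤ n) ∨ Relation.TransGen r a b

/-- `decBelow I x y` : `x` is below `y` by a decreasing relation of `I`. -/
def decBelow (I : IntervalPoset) (x y : ℕ) : Prop := I.rel x y ∧ y < x

/-- Connectivity in `dec I` (the poset of decreasing relations of `I`). -/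
def decConn (I : IntervalPoset) : ℕ → ℕ → Prop :=
  Relation.ReflTransGen (fun a b => decBelow I a b ∨ decBelow I b a)

/-- `compMin I r` : `r` is the least label of a connected component of `dec I`. -/
def compMin (I : IntervalPoset) (r : ℕ) : Prop :=
  1 ≤ r ∧ r ≤ I.n ∧ ∀ y, decConn I r y → r ≤ y

/-- `trees I` : the number of connected components of `dec I`. -/
noncomputable def trees (I : IntervalPoset) : ℕ := {r | compMin I r}.ncard

/-- The composition `𝔹(I1, I2)` of two interval-posets: all interval-posets
`I` of size `I1.n + I2.n + 1` whose induced subposet on `{1, …, k1}` is `I1`,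
whose induced subposet on `{k1+2, …, k1+k2+1}` is `I2` shifted by `k1+1`, with
`i ⊴ k1+1` for all `i ≤ k1` and `k1+1 ⊴ j` for no `j > k1+1`. -/
def comp (I1 I2 : IntervalPoset) : Set IntervalPoset :=
  {I | I.n = I1.n + I2.n + 1 ∧
    (∀ a b, 1 ≤ a → a ≤ I1.n → 1 ≤ b → b ≤ I1.n → (I.rel a b ↔ I1.rel a b)) ∧
    (∀ a b, 1 ≤ a → a ≤ I2.n → 1 ≤ b → b ≤ I2.n →
      (I.rel (a + I1.n + 1) (b + I1.n + 1) ↔ I2.rel a b)) ∧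
    (∀ i, 1 ≤ i → i ≤ I1.n → I.rel i (I1.n + 1)) ∧
    (∀ j, I1.n + 1 < j → ¬ I.rel (I1.n + 1) j)}

/-!
In an element `Q` of `𝔹(I1, I2)` all relations are forced except those `y ⊴ k1+1` with
`y > k1+1`. The increasing condition at `k1+1`, together with `k1+1 ⊴ j` for no `j > k1+1`,
rules out relations between the two blocks. For `y > k1+1` with root `r` (the least label of
its component in `dec I2`) one has `y ⊴ r`, `r ≤ y`, so `y ⊴ k1+1` iff `r ⊴ k1+1`, by
transitivity and the decreasing condition. The roots `x_j` with `x_j ⊴ k1+1` form an initial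
segment `x_1, …, x_i`, again by the decreasing condition, whence `Q = P_i`. Conversely `P_i`
satisfies the decreasing condition at `k1+1` because roots are monotone in the labels: if
`b < c`, the root of `b` is at most any root `r` with `c ⊴ r`.
-/

theorem Nat.exists_eq_Icc_of_lowerClosed {S : Set ℕ} {t : ℕ} (hS : ∀ j ∈ S, 1 ≤ j ∧ j ≤ t)
    (hlow : ∀ i j, 1 ≤ i → i ≤ j → j ∈ S → i ∈ S) : ∃ i ≤ t, ∀ j, j ∈ S ↔ 1 ≤ j ∧ j ≤ i := by
  induction t with
  | zero => exact ⟨0, le_rfl, fun j => ⟨hS j, fun h => by omega⟩⟩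
  | succ t ih =>
    by_cases ht : t + 1 ∈ S
    · exact ⟨t + 1, le_rfl, fun j => ⟨hS j, fun h => hlow j (t + 1) h.1 h.2 ht⟩⟩
    · have hS' : ∀ j ∈ S, 1 ≤ j ∧ j ≤ t := fun j hj => by
        have := hS j hj
        have : j ≠ t + 1 := fun h => ht (h ▸ hj)
        omega
      obtain ⟨i, hi, hiff⟩ := ih hS'
      exact ⟨i, hi.trans t.le_succ, hiff⟩

theorem genClos_eq {n : ℕ} {r R : ℕ → ℕ → Prop}
    (hrefl : ∀ a, 1 ≤ a → a ≤ n → R a a) (htrans : ∀ a b c, R a b → R b c → R a c)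
    (hr : ∀ a b, r a b → R a b)
    (hR : ∀ a b, R a b → genClos n r a b) : genClos n r = R := by
  funext a b
  refine propext ⟨fun h => ?_, hR a b⟩
  rcases h with ⟨rfl, h1, h2⟩ | h
  · exact hrefl a h1 h2
  induction h with
  | single h => exact hr _ _ h
  | tail _ h ih => exact htrans _ _ _ ih (hr _ _ h)

theorem IntervalPoset.ext_rel {I J : IntervalPoset} (hn : I.n = J.n) (hr : I.rel = J.rel) :
    I = J := by
  cases I; cases J; cases hn; cases hr; rfl

section Components

variable (I : IntervalPoset)

theorem IntervalPoset.rel_of_le_of_le {y r z : ℕ} (h : I.rel y r) (hrz : r ≤ z)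
    (hzy : z ≤ y) : I.rel z r := by
  rcases hrz.eq_or_lt with rfl | hrz
  · obtain ⟨-, -, h1, h2⟩ := I.supp _ _ h
    exact I.refl _ h1 h2
  rcases hzy.eq_or_lt with rfl | hzy
  · exact h
  exact I.decCond r z y h hrz hzy

theorem decConn_symm {a b : ℕ} (h : decConn I a b) : decConn I b a := by
  induction h with
  | refl => exact .refl
  | tail _ hstep ih => exact .head hstep.symm ih

theorem decConn_of_rel {a b : ℕ} (h : I.rel a b) (hba : b ≤ a) : decConn I a b := by
  rcases hba.eq_or_lt with rfl | hlt
  · exact .refl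
  · exact .single (Or.inl ⟨h, hlt⟩)

theorem mem_Icc_of_decConn {a b : ℕ} (ha : 1 ≤ a) (han : a ≤ I.n) (h : decConn I a b) :
    1 ≤ b ∧ b ≤ I.n := by
  induction h with
  | refl => exact ⟨ha, han⟩
  | tail _ hstep _ =>
    rcases hstep with ⟨hr, -⟩ | ⟨hr, -⟩
    · exact ⟨(I.supp _ _ hr).2.2.1, (I.supp _ _ hr).2.2.2⟩
    · exact ⟨(I.supp _ _ hr).1, (I.supp _ _ hr).2.1⟩

variable {I}

theorem compMin.rel_of_decConn {r y : ℕ} (hr : compMin I r) (h : decConn I r y) : I.rel y r := by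
  induction h with
  | refl => exact I.refl r hr.1 hr.2.1
  | @tail z y hrz hstep ih =>
    have hry : r ≤ y := hr.2.2 y (hrz.tail hstep)
    rcases hstep with ⟨-, hyz⟩ | ⟨hyz, -⟩
    · exact I.rel_of_le_of_le ih hry hyz.le
    · exact I.trans _ _ _ hyz ih

theorem exists_compMin_rel {y : ℕ} (h1 : 1 ≤ y) (h2 : y ≤ I.n) :
    ∃ r, compMin I r ∧ I.rel y r ∧ r ≤ y := by
  have hne : {z | decConn I y z}.Nonempty := ⟨y, .refl⟩
  have hr : decConn I y (sInf {z | decConn I y z}) := Nat.sInf_mem hne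
  have hmin : compMin I (sInf {z | decConn I y z}) :=
    ⟨(mem_Icc_of_decConn I h1 h2 hr).1, (mem_Icc_of_decConn I h1 h2 hr).2,
      fun z hz => Nat.sInf_le (hr.trans hz)⟩
  exact ⟨_, hmin, hmin.rel_of_decConn (decConn_symm I hr), Nat.sInf_le .refl⟩

theorem compMin.le_of_rel {r r' : ℕ} (hr : compMin I r) (h : I.rel r r') : r ≤ r' :=
  le_of_not_gt fun hlt => (hr.2.2 r' (.single (Or.inl ⟨h, hlt⟩))).not_gt hlt

theorem compMin.le_of_rel_of_lt {b c r r' : ℕ} (hr : compMin I r) (hb : I.rel b r) (hrb : r ≤ b)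
    (hc : I.rel c r') (hbc : b < c) : r ≤ r' := by
  rcases lt_or_ge b r' with hbr' | hr'b
  · omega
  have hbr' : I.rel b r' := I.rel_of_le_of_le hc hr'b hbc.le
  exact hr.2.2 r' ((decConn_symm I (decConn_of_rel I hb hrb)).trans (decConn_of_rel I hbr' hr'b))

end Components

def IntervalPoset.shiftRel (I : IntervalPoset) (k a b : ℕ) : Prop :=
  ∃ a' b', I.rel a' b' ∧ a = a' + k ∧ b = b' + k

namespace IntervalPoset.shiftRel

variable {I : IntervalPoset} {k a b c : ℕ}

theorem bounds (h : I.shiftRel k a b) :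
    k + 1 ≤ a ∧ a ≤ I.n + k ∧ k + 1 ≤ b ∧ b ≤ I.n + k := by
  obtain ⟨a', b', hr, rfl, rfl⟩ := h
  have := I.supp _ _ hr
  omega

theorem shift_iff : I.shiftRel k (a + k) (b + k) ↔ I.rel a b :=
  ⟨fun ⟨a', b', hr, ha, hb⟩ => by rwa [Nat.add_right_cancel ha, Nat.add_right_cancel hb],
    fun h => ⟨a, b, h, rfl, rfl⟩⟩

theorem refl (h1 : k + 1 ≤ a) (h2 : a ≤ I.n + k) : I.shiftRel k a a :=
  ⟨a - k, a - k, I.refl _ (by omega) (by omega), by omega, by omega⟩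

theorem trans (h1 : I.shiftRel k a b) (h2 : I.shiftRel k b c) : I.shiftRel k a c := by
  obtain ⟨a', b', hr, rfl, rfl⟩ := h1
  obtain ⟨b'', c', hr', hb, rfl⟩ := h2
  obtain rfl : b' = b'' := by omega
  exact ⟨a', c', I.trans _ _ _ hr hr', rfl, rfl⟩

theorem antisymm (h1 : I.shiftRel k a b) (h2 : I.shiftRel k b a) : a = b := by
  obtain ⟨a', b', hr, rfl, rfl⟩ := h1
  rw [shift_iff] at h2
  rw [I.antisymm _ _ hr h2]

theorem incCond (h : I.shiftRel k a c) (hab : a < b) (hbc : b < c) : I.shiftRel k b c := by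
  obtain ⟨a', c', hr, rfl, rfl⟩ := h
  exact ⟨b - k, c', I.incCond _ _ _ hr (by omega) (by omega), by omega, rfl⟩

theorem decCond (h : I.shiftRel k c a) (hab : a < b) (hbc : b < c) : I.shiftRel k b a := by
  obtain ⟨c', a', hr, rfl, rfl⟩ := h
  exact ⟨b - k, a', I.decCond _ _ _ hr (by omega) (by omega), by omega, rfl⟩

end IntervalPoset.shiftRel

/-- `x 1 < ⋯ < x t` are the least labels of the components of `dec I`, shifted by `k`. -/
structure IsRootEnum (I : IntervalPoset) (k t : ℕ) (x : ℕ → ℕ) : Prop where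
  lt : ∀ i j, 1 ≤ i → i < j → j ≤ t → x i < x j
  exists_eq : ∀ r, compMin I r → ∃ j, 1 ≤ j ∧ j ≤ t ∧ x j = r + k
  exists_compMin : ∀ j, 1 ≤ j → j ≤ t → ∃ r, compMin I r ∧ x j = r + k

theorem exists_compMin_of_trees {I : IntervalPoset} {k t : ℕ} {x : ℕ → ℕ} (ht : t = trees I)
    (hx : ∀ r, compMin I r → ∃ j, 1 ≤ j ∧ j ≤ t ∧ x j = r + k) {j : ℕ}
    (hj : 1 ≤ j) (hjt : j ≤ t) : ∃ r, compMin I r ∧ x j = r + k := by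
  set T := {j | 1 ≤ j ∧ j ≤ t ∧ ∃ r, compMin I r ∧ x j = r + k}
  have hTsub : T ⊆ Set.Icc 1 t := fun j hj => ⟨hj.1, hj.2.1⟩
  have hTfin : T.Finite := (Set.finite_Icc 1 t).subset hTsub
  have hcover : {r | compMin I r} ⊆ (fun j => x j - k) '' T := fun r hr => by
    obtain ⟨j, hj1, hjt, hxj⟩ := hx r hr
    exact ⟨j, ⟨hj1, hjt, r, hr, hxj⟩, by simp [hxj]⟩
  have hcard : (Set.Icc 1 t).ncard ≤ T.ncard :=
    calc (Set.Icc 1 t).ncard = t := by simp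
      _ = {r | compMin I r}.ncard := ht
      _ ≤ ((fun j => x j - k) '' T).ncard := Set.ncard_le_ncard hcover (hTfin.image _)
      _ ≤ T.ncard := Set.ncard_image_le hTfin
  have hT : T = Set.Icc 1 t := Set.eq_of_subset_of_ncard_le hTsub hcard
  exact (hT ▸ ⟨hj, hjt⟩ : j ∈ T).2.2

theorem IsRootEnum.of_trees {I : IntervalPoset} {k t : ℕ} {x : ℕ → ℕ} (ht : t = trees I)
    (hmono : ∀ i j, 1 ≤ i → i < j → j ≤ t → x i < x j)
    (hx : ∀ r, compMin I r ↔ ∃ j, 1 ≤ j ∧ j ≤ t ∧ x j = r + k) : IsRootEnum I k t x :=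
  ⟨hmono, fun r => (hx r).1,
    fun _ hj hjt => exists_compMin_of_trees ht (fun r => (hx r).1) hj hjt⟩

namespace IsRootEnum

variable {I : IntervalPoset} {k t : ℕ} {x : ℕ → ℕ}

theorem bounds (hx : IsRootEnum I k t x) {j : ℕ} (hj : 1 ≤ j) (hjt : j ≤ t) :
    k + 1 ≤ x j ∧ x j ≤ I.n + k := by
  obtain ⟨r, hr, hxj⟩ := hx.exists_compMin j hj hjt
  have := hr.1
  have := hr.2.1
  omega

theorem le_of_shiftRel (hx : IsRootEnum I k t x) {j j' : ℕ} (hj : 1 ≤ j) (hj' : 1 ≤ j')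
    (hjt : j ≤ t) (h : I.shiftRel k (x j) (x j')) : j ≤ j' := by
  obtain ⟨r, hr, hxj⟩ := hx.exists_compMin j hj hjt
  obtain ⟨a, b, hab, ha, hb⟩ := h
  have hra : r = a := by omega
  have := hr.le_of_rel (hra ▸ hab)
  by_contra! hlt
  have := hx.lt j' j hj' hlt hjt
  omega

theorem exists_shiftRel_of_lt (hx : IsRootEnum I k t x) {j b c : ℕ} (hj : 1 ≤ j)
    (hc : I.shiftRel k c (x j)) (hb : k < b) (hbc : b < c) :
    ∃ j', 1 ≤ j' ∧ j' ≤ j ∧ I.shiftRel k b (x j') := by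
  obtain ⟨c', r, hcr, rfl, hxj⟩ := hc
  obtain ⟨b', rfl⟩ : ∃ b', b = b' + k := ⟨b - k, by omega⟩
  have := I.supp _ _ hcr
  obtain ⟨r', hr', hbr', hr'b⟩ := exists_compMin_rel (I := I) (y := b') (by omega) (by omega)
  have hle : r' ≤ r := hr'.le_of_rel_of_lt hbr' hr'b hcr (by omega)
  obtain ⟨j', hj', hj't, hxj'⟩ := hx.exists_eq r' hr'
  refine ⟨j', hj', ?_, ⟨b', r', hbr', rfl, hxj'⟩⟩
  by_contra! hlt
  have := hx.lt j j' hj hlt hj't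
  omega

end IsRootEnum

/-- The relation of `P_i`, in closed form. -/
def compRel (I1 I2 : IntervalPoset) (x : ℕ → ℕ) (i a b : ℕ) : Prop :=
  (a = b ∧ 1 ≤ a ∧ a ≤ I1.n + I2.n + 1) ∨ I1.rel a b ∨ I2.shiftRel (I1.n + 1) a b ∨
    (b = I1.n + 1 ∧ 1 ≤ a ∧ a ≤ I1.n) ∨
    (b = I1.n + 1 ∧ ∃ j, 1 ≤ j ∧ j ≤ i ∧ I2.shiftRel (I1.n + 1) a (x j))

namespace compRel

variable {I1 I2 : IntervalPoset} {x : ℕ → ℕ} {i a b c : ℕ}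

theorem bounds (h : compRel I1 I2 x i a b) :
    1 ≤ a ∧ a ≤ I1.n + I2.n + 1 ∧ 1 ≤ b ∧ b ≤ I1.n + I2.n + 1 := by
  rcases h with ⟨rfl, h⟩ | h | h | ⟨rfl, h⟩ | ⟨rfl, j, -, -, h⟩
  · omega
  · have := I1.supp _ _ h; omega
  · have := h.bounds; omega
  · omega
  · have := h.bounds; omega

theorem eq_of_mid (h : compRel I1 I2 x i (I1.n + 1) c) : c = I1.n + 1 := by
  rcases h with ⟨h, -⟩ | h | h | ⟨-, -, h⟩ | ⟨h, -⟩
  · exact h.symm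
  · have := I1.supp _ _ h; omega
  · have := h.bounds; omega
  · omega
  · exact h

theorem trans (h1 : compRel I1 I2 x i a b) (h2 : compRel I1 I2 x i b c) :
    compRel I1 I2 x i a c := by
  rcases h1 with ⟨rfl, -⟩ | h1 | h1 | ⟨rfl, ha⟩ | ⟨rfl, hj⟩
  · exact h2
  · have hb := I1.supp _ _ h1
    rcases h2 with ⟨rfl, -⟩ | h2 | h2 | ⟨rfl, -⟩ | ⟨rfl, j, -, -, h2⟩
    · exact .inr (.inl h1)
    · exact .inr (.inl (I1.trans _ _ _ h1 h2))
    · have := h2.bounds; omega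
    · exact .inr (.inr (.inr (.inl ⟨rfl, hb.1, hb.2.1⟩)))
    · have := h2.bounds; omega
  · have hb := h1.bounds
    rcases h2 with ⟨rfl, -⟩ | h2 | h2 | ⟨rfl, hb'⟩ | ⟨rfl, j, hj, hji, h2⟩
    · exact .inr (.inr (.inl h1))
    · have := I1.supp _ _ h2; omega
    · exact .inr (.inr (.inl (h1.trans h2)))
    · omega
    · exact .inr (.inr (.inr (.inr ⟨rfl, j, hj, hji, h1.trans h2⟩)))
  · rw [eq_of_mid h2]
    exact .inr (.inr (.inr (.inl ⟨rfl, ha⟩)))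
  · rw [eq_of_mid h2]
    exact .inr (.inr (.inr (.inr ⟨rfl, hj⟩)))

theorem antisymm (h1 : compRel I1 I2 x i a b) (h2 : compRel I1 I2 x i b a) : a = b := by
  rcases h1 with ⟨rfl, -⟩ | h1 | h1 | ⟨rfl, -⟩ | ⟨rfl, -⟩
  · rfl
  · have hb := I1.supp _ _ h1
    rcases h2 with ⟨rfl, -⟩ | h2 | h2 | ⟨rfl, -⟩ | ⟨rfl, -⟩
    · rfl
    · exact I1.antisymm _ _ h1 h2
    · have := h2.bounds; omega
    · omega
    · omega
  · have hb := h1.bounds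
    rcases h2 with ⟨rfl, -⟩ | h2 | h2 | ⟨rfl, -⟩ | ⟨rfl, j, -, -, h2⟩
    · rfl
    · have := I1.supp _ _ h2; omega
    · exact h1.antisymm h2
    · omega
    · have := h2.bounds; omega
  · exact eq_of_mid h2
  · exact eq_of_mid h2

theorem incCond (h : compRel I1 I2 x i a c) (hab : a < b) (hbc : b < c) :
    compRel I1 I2 x i b c := by
  rcases h with ⟨rfl, -⟩ | h | h | ⟨rfl, ha⟩ | ⟨rfl, j, -, -, h⟩
  · omega
  · exact .inr (.inl (I1.incCond _ _ _ h hab hbc))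
  · exact .inr (.inr (.inl (h.incCond hab hbc)))
  · exact .inr (.inr (.inr (.inl ⟨rfl, by omega, by omega⟩)))
  · have := h.bounds; omega

theorem decCond {t : ℕ} (hx : IsRootEnum I2 (I1.n + 1) t x)
    (h : compRel I1 I2 x i c a) (hab : a < b) (hbc : b < c) : compRel I1 I2 x i b a := by
  rcases h with ⟨rfl, -⟩ | h | h | ⟨rfl, hc⟩ | ⟨rfl, j, hj, hji, h⟩
  · omega
  · exact .inr (.inl (I1.decCond _ _ _ h hab hbc))
  · exact .inr (.inr (.inl (h.decCond hab hbc)))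
  · omega
  · obtain ⟨j', hj', hj'j, h'⟩ := hx.exists_shiftRel_of_lt hj h hab hbc
    exact .inr (.inr (.inr (.inr ⟨rfl, j', hj', hj'j.trans hji, h'⟩)))

end compRel

def compPoset (I1 I2 : IntervalPoset) {t : ℕ} {x : ℕ → ℕ}
    (hx : IsRootEnum I2 (I1.n + 1) t x) (i : ℕ) : IntervalPoset where
  n := I1.n + I2.n + 1
  rel := compRel I1 I2 x i
  supp _ _ h := h.bounds
  refl _ h1 h2 := .inl ⟨rfl, h1, h2⟩
  antisymm _ _ := compRel.antisymm
  trans _ _ _ := compRel.trans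
  incCond _ _ _ := compRel.incCond
  decCond _ _ _ := compRel.decCond hx

/-- The generating relations of `P_i`. -/
def compGen (I1 I2 : IntervalPoset) (x : ℕ → ℕ) (i u v : ℕ) : Prop :=
  I1.rel u v ∨
    (∃ a b, I2.rel a b ∧ u = a + I1.n + 1 ∧ v = b + I1.n + 1) ∨
    (v = I1.n + 1 ∧ 1 ≤ u ∧ u ≤ I1.n) ∨
    (v = I1.n + 1 ∧ ∃ j, 1 ≤ j ∧ j ≤ i ∧ u = x j)

section Composition

variable {I1 I2 : IntervalPoset} {t : ℕ} {x : ℕ → ℕ}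

theorem IsRootEnum.compRel_eq_genClos (hx : IsRootEnum I2 (I1.n + 1) t x) {i : ℕ}
    (hit : i ≤ t) : compRel I1 I2 x i = genClos (I1.n + I2.n + 1) (compGen I1 I2 x i) := by
  refine (genClos_eq (R := compRel I1 I2 x i) (fun a h1 h2 => .inl ⟨rfl, h1, h2⟩)
    (fun _ _ _ => compRel.trans) (fun u v h => ?_) (fun u v h => ?_)).symm
  · rcases h with h | h | h | ⟨rfl, j, hj, hji, rfl⟩
    · exact .inr (.inl h)
    · exact .inr (.inr (.inl h))
    · exact .inr (.inr (.inr (.inl h)))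
    · have := hx.bounds hj (hji.trans hit)
      exact .inr (.inr (.inr (.inr ⟨rfl, j, hj, hji, .refl this.1 this.2⟩)))
  · rcases h with h | h | h | h | ⟨rfl, j, hj, hji, h⟩
    · exact .inl h
    · exact .inr (.single (.inl h))
    · exact .inr (.single (.inr (.inl h)))
    · exact .inr (.single (.inr (.inr (.inl h))))
    · exact .inr (.tail (.single (.inr (.inl h))) (.inr (.inr (.inr ⟨rfl, j, hj, hji, rfl⟩))))

theorem compPoset_mem_comp (hx : IsRootEnum I2 (I1.n + 1) t x) (i : ℕ) :
    compPoset I1 I2 hx i ∈ comp I1 I2 := by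
  refine ⟨rfl, fun a b ha1 ha2 hb1 hb2 => ⟨fun h => ?_, fun h => .inr (.inl h)⟩,
    fun a b ha1 ha2 hb1 hb2 =>
      ⟨fun h => ?_, fun h => .inr (.inr (.inl ⟨a, b, h, rfl, rfl⟩))⟩,
    fun a ha1 ha2 => .inr (.inr (.inr (.inl ⟨rfl, ha1, ha2⟩))),
    fun b hb h => by have := compRel.eq_of_mid h; omega⟩
  · rcases h with ⟨rfl, -⟩ | h | h | ⟨rfl, -⟩ | ⟨rfl, -⟩
    · exact I1.refl a ha1 ha2
    · exact h
    · have := h.bounds; omega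
    · omega
    · omega
  · rcases h with ⟨hab, -⟩ | h | h | ⟨hb, -⟩ | ⟨hb, -⟩
    · obtain rfl : a = b := by omega
      exact I2.refl a ha1 ha2
    · have := I1.supp _ _ h; omega
    · exact IntervalPoset.shiftRel.shift_iff.1 h
    · omega
    · omega

variable {Q : IntervalPoset} {a b : ℕ}

theorem not_rel_of_mem_comp (hQ : Q ∈ comp I1 I2) (ha1 : 1 ≤ a) (ha2 : a ≤ I1.n)
    (hb : I1.n + 2 ≤ b) : ¬ Q.rel a b ∧ ¬ Q.rel b a := by
  obtain ⟨-, -, -, hmid, hnot⟩ := hQ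
  refine ⟨fun h => hnot b (by omega) (Q.incCond a (I1.n + 1) b h (by omega) (by omega)),
    fun h => ?_⟩
  have := Q.antisymm _ _ (hmid a ha1 ha2) (Q.decCond a (I1.n + 1) b h (by omega) (by omega))
  omega

theorem rel_cases_of_mem_comp (hQ : Q ∈ comp I1 I2) (h : Q.rel a b) :
    (a = b ∧ 1 ≤ a ∧ a ≤ I1.n + I2.n + 1) ∨ I1.rel a b ∨ I2.shiftRel (I1.n + 1) a b ∨
      (b = I1.n + 1 ∧ 1 ≤ a ∧ a ≤ I1.n) ∨ (b = I1.n + 1 ∧ I1.n + 1 < a) := by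
  have hab := Q.supp a b h
  have ⟨hn, hleft, hright, hmid, hnot⟩ := hQ
  rw [hn] at hab
  rcases lt_trichotomy a (I1.n + 1) with ha | rfl | ha <;>
    rcases lt_trichotomy b (I1.n + 1) with hb | rfl | hb
  · exact .inr (.inl ((hleft a b hab.1 (by omega) hab.2.2.1 (by omega)).1 h))
  · exact .inr (.inr (.inr (.inl ⟨rfl, hab.1, by omega⟩)))
  · exact absurd h (not_rel_of_mem_comp hQ hab.1 (by omega) (by omega)).1
  · have := Q.antisymm _ _ h (hmid b hab.2.2.1 (by omega))
    omega
  · exact .inl ⟨rfl, hab.1, hab.2.1⟩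
  · exact absurd h (hnot b hb)
  · exact absurd h (not_rel_of_mem_comp hQ hab.2.2.1 (by omega) (by omega)).2
  · exact .inr (.inr (.inr (.inr ⟨rfl, ha⟩)))
  · obtain ⟨a', rfl⟩ : ∃ a', a = a' + (I1.n + 1) := ⟨a - (I1.n + 1), by omega⟩
    obtain ⟨b', rfl⟩ : ∃ b', b = b' + (I1.n + 1) := ⟨b - (I1.n + 1), by omega⟩
    exact .inr (.inr (.inl ⟨a', b', (hright a' b' (by omega) (by omega) (by omega)
      (by omega)).1 h, rfl, rfl⟩))

namespace IsRootEnum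

theorem exists_rel_root_of_mem_comp (hx : IsRootEnum I2 (I1.n + 1) t x) (hQ : Q ∈ comp I1 I2)
    (ha : I1.n + 1 < a) (h : Q.rel a (I1.n + 1)) :
    ∃ j, 1 ≤ j ∧ j ≤ t ∧ I2.shiftRel (I1.n + 1) a (x j) ∧ Q.rel (x j) (I1.n + 1) := by
  obtain ⟨hn, -, hright, -, -⟩ := hQ
  obtain ⟨a', rfl⟩ : ∃ a', a = a' + (I1.n + 1) := ⟨a - (I1.n + 1), by omega⟩
  have := Q.supp _ _ h
  obtain ⟨r, hr, har, hra⟩ := exists_compMin_rel (I := I2) (y := a') (by omega) (by omega)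
  obtain ⟨j, hj, hjt, hxj⟩ := hx.exists_eq r hr
  refine ⟨j, hj, hjt, ⟨a', r, har, rfl, hxj⟩, ?_⟩
  rcases hra.eq_or_lt with rfl | hlt
  · rwa [hxj]
  · have := hr.1
    exact Q.decCond _ _ _ h (by omega) (by omega)

theorem exists_rel_eq_compRel_of_mem_comp (hx : IsRootEnum I2 (I1.n + 1) t x)
    (hQ : Q ∈ comp I1 I2) : ∃ i ≤ t, Q.rel = compRel I1 I2 x i := by
  obtain ⟨i, hit, hi⟩ := Nat.exists_eq_Icc_of_lowerClosed
    (S := {j | 1 ≤ j ∧ j ≤ t ∧ Q.rel (x j) (I1.n + 1)}) (fun j hj => ⟨hj.1, hj.2.1⟩)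
    (fun i j hi hij ⟨hj, hjt, h⟩ => by
      refine ⟨hi, hij.trans hjt, ?_⟩
      rcases hij.eq_or_lt with rfl | hlt
      · exact h
      · exact Q.decCond _ _ _ h (by have := hx.bounds hi (by omega); omega) (hx.lt i j hi hlt hjt))
  refine ⟨i, hit, funext fun a => funext fun b => propext ⟨fun h => ?_, fun h => ?_⟩⟩
  · rcases rel_cases_of_mem_comp hQ h with h | h | h | h | ⟨rfl, ha⟩
    · exact .inl h
    · exact .inr (.inl h)
    · exact .inr (.inr (.inl h))
    · exact .inr (.inr (.inr (.inl h)))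
    obtain ⟨j, hj, hjt, haj, hjm⟩ := hx.exists_rel_root_of_mem_comp hQ ha h
    exact .inr (.inr (.inr (.inr ⟨rfl, j, hj, ((hi j).1 ⟨hj, hjt, hjm⟩).2, haj⟩)))
  · obtain ⟨hn, hleft, hright, hmid, -⟩ := hQ
    rcases h with ⟨rfl, h1, h2⟩ | h | ⟨a', b', h, rfl, rfl⟩ | ⟨rfl, h1, h2⟩ |
      ⟨rfl, j, hj, hji, h⟩
    · exact Q.refl a h1 (hn ▸ h2)
    · have := I1.supp _ _ h
      exact (hleft a b this.1 this.2.1 this.2.2.1 this.2.2.2).2 h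
    · have := I2.supp _ _ h
      exact (hright a' b' this.1 this.2.1 this.2.2.1 this.2.2.2).2 h
    · exact hmid a h1 h2
    · obtain ⟨a', r, h, rfl, hxj⟩ := h
      have := I2.supp _ _ h
      have har : Q.rel (a' + (I1.n + 1)) (x j) :=
        hxj ▸ (hright a' r this.1 this.2.1 this.2.2.1 this.2.2.2).2 h
      exact Q.trans _ _ _ har ((hi j).2 ⟨hj, hji⟩).2.2

theorem compRel_root_iff (hx : IsRootEnum I2 (I1.n + 1) t x) {i j : ℕ} (hj : 1 ≤ j)
    (hjt : j ≤ t) : compRel I1 I2 x i (x j) (I1.n + 1) ↔ j ≤ i := by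
  have hxj := hx.bounds hj hjt
  refine ⟨fun h => ?_,
    fun h => .inr (.inr (.inr (.inr ⟨rfl, j, hj, h, .refl hxj.1 hxj.2⟩)))⟩
  rcases h with ⟨h, -⟩ | h | h | ⟨-, -, h⟩ | ⟨-, j', hj', hj'i, h⟩
  · omega
  · have := I1.supp _ _ h; omega
  · have := h.bounds; omega
  · omega
  · exact (hx.le_of_shiftRel hj hj' hjt h).trans hj'i

theorem compRel_injOn (hx : IsRootEnum I2 (I1.n + 1) t x) {i i' : ℕ} (hi : i ≤ t)
    (hi' : i' ≤ t) (h : compRel I1 I2 x i = compRel I1 I2 x i') : i = i' := by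
  have key : ∀ j, 1 ≤ j → j ≤ t → (j ≤ i ↔ j ≤ i') := fun j hj hjt => by
    rw [← hx.compRel_root_iff hj hjt, ← hx.compRel_root_iff hj hjt, h]
  rcases lt_trichotomy i i' with hlt | heq | hgt
  · have := (key i' (by omega) hi').2 le_rfl; omega
  · exact heq
  · have := (key i (by omega) hi).1 le_rfl; omega

end IsRootEnum

end Composition

/-- Explicit description of the composition `𝔹(I1,I2)`: it consists of exactly
`t+1` interval-posets `P_0, …, P_t` (`t = trees I2`, `x 1 < ⋯ < x t` the least
labels of the components of `dec I2` shifted by `k1+1`), where `P i` is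
generated by the relations of `I1`, the shifted relations of `I2`, the
increasing relations `j ⊴ k1+1` for `j ≤ k1`, and the decreasing relations
`x j ⊴ k1+1` for `j ≤ i`; moreover no element of `𝔹(I1,I2)` has a relation
between `{1,…,k1}` and `{k1+2,…,k1+k2+1}`. -/
theorem stmt6 (I1 I2 : IntervalPoset) (t : ℕ) (ht : t = trees I2) (x : ℕ → ℕ)
    (hmono : ∀ i j, 1 ≤ i → i < j → j ≤ t → x i < x j)
    (hx : ∀ r, compMin I2 r ↔ ∃ j, 1 ≤ j ∧ j ≤ t ∧ x j = r + I1.n + 1) :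
    ∃ P : ℕ → IntervalPoset,
      (∀ i, i ≤ t → (P i).rel = genClos (I1.n + I2.n + 1)
        (fun u v =>
          I1.rel u v ∨
          (∃ a b, I2.rel a b ∧ u = a + I1.n + 1 ∧ v = b + I1.n + 1) ∨
          (v = I1.n + 1 ∧ 1 ≤ u ∧ u ≤ I1.n) ∨
          (v = I1.n + 1 ∧ ∃ j, 1 ≤ j ∧ j ≤ i ∧ u = x j))) ∧
      (comp I1 I2 = {Q | ∃ i, i ≤ t ∧ Q = P i}) ∧
      (∀ i j, i ≤ t → j ≤ t → P i = P j → i = j) ∧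
      (∀ Q ∈ comp I1 I2, ∀ a b, 1 ≤ a → a ≤ I1.n → I1.n + 2 ≤ b →
        b ≤ I1.n + I2.n + 1 → ¬ Q.rel a b ∧ ¬ Q.rel b a) := by
  have hroot : IsRootEnum I2 (I1.n + 1) t x := .of_trees ht hmono hx
  refine ⟨compPoset I1 I2 hroot, fun i hi => hroot.compRel_eq_genClos hi, ?_,
    fun i j hi hj h => hroot.compRel_injOn hi hj (congrArg IntervalPoset.rel h),
    fun Q hQ a b ha1 ha2 hb _ => not_rel_of_mem_comp hQ ha1 ha2 hb⟩
  ext Q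
  refine ⟨fun hQ => ?_, ?_⟩
  · obtain ⟨i, hi, hrel⟩ := hroot.exists_rel_eq_compRel_of_mem_comp hQ
    exact ⟨i, hi, IntervalPoset.ext_rel hQ.1 hrel⟩
  · rintro ⟨i, -, rfl⟩
    exact compPoset_mem_comp hroot i
end
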